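/- Let G be a compact group acting continuously on a unital C*-algebra A and on l₂(A) by bounded A-semilinear automorphisms T_g (i.e., T_g(u·a) = T_g(u)·g(a)) with ‖T_g‖ ≤ N for all g ∈ G. Then the averaged inner product ⟨u,v⟩' = ∫_G g⁻¹(⟨T_g u, T_g v⟩) dg defines a norm equivalent to the original one: N⁻¹ ‖u‖ ≤ ‖u‖' ≤ N ‖u‖ for all u ∈ l₂(A), where ‖u‖' = ‖⟨u,u⟩'‖^{1/2}. -/

import Mathlib

/-!
For a bounded map `S` that is semilinear over a *-automorphism `σ` one has the
Paschke-type inequality `⟨S w, S w⟩ ≤ N² σ⟨w, w⟩`: normalise `w` by a square root of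
`⟨w, w⟩ + ε`, so that it lies in the unit ball, and let `ε → 0`. Applied to `T g⁻¹` at
`T g u` it gives `⟨u, u⟩ ≤ N² g⁻¹⟨T g u, T g u⟩`, while `⟨T g u, T g u⟩ ≤ N²‖u‖²` directly.
The automorphisms of `A` are continuous, hence fix real scalars, and preserve order, so
integrating these pointwise bounds against the probability measure gives
`N⁻² ⟨u, u⟩ ≤ ⟨u, u⟩' ≤ N²‖u‖²`.
-/

open MeasureTheory Filter Topology

def RingHom.toRealStarAlgHom {A B : Type*} [Ring A] [StarRing A] [Algebra ℝ A] [TopologicalSpace A]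
    [ContinuousSMul ℝ A] [Ring B] [StarRing B] [Algebra ℝ B] [TopologicalSpace B]
    [ContinuousSMul ℝ B] [T2Space B] (f : A →+* B) (hf : Continuous f)
    (hstar : ∀ a, f (star a) = star (f a)) : A →⋆ₐ[ℝ] B where
  toRingHom := f
  commutes' r := by
    change f (algebraMap ℝ A r) = algebraMap ℝ B r
    rw [Algebra.algebraMap_eq_smul_one, map_real_smul f hf, map_one, Algebra.algebraMap_eq_smul_one]
  map_star' := hstar

theorem le_of_forall_pos_le_add_smul {E : Type*} [AddCommGroup E] [Module ℝ E] [TopologicalSpace E]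
    [ContinuousAdd E] [ContinuousSMul ℝ E] [PartialOrder E] [ClosedIciTopology E]
    {a b c : E} (h : ∀ ε : ℝ, 0 < ε → a ≤ b + ε • c) : a ≤ b := by
  have hlim : Tendsto (fun ε : ℝ => b + ε • c) (𝓝[>] 0) (𝓝 b) := by
    have hcont : Continuous fun ε : ℝ => b + ε • c := by fun_prop
    simpa using (hcont.tendsto 0).mono_left nhdsWithin_le_nhds
  exact ge_of_tendsto hlim (eventually_nhdsWithin_of_forall h)

section HilbertModule

variable {A : Type*} [CStarAlgebra A] [PartialOrder A] [StarOrderedRing A] {M : Type*}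
  [NormedAddCommGroup M]

theorem inner_self_le_algebraMap_iff {inner : M → M → A} (hpos : ∀ u : M, 0 ≤ inner u u)
    (hnorm : ∀ u : M, ‖u‖ = √‖inner u u‖) (u : M) {r : ℝ} (hr : 0 ≤ r) :
    inner u u ≤ algebraMap ℝ A (r ^ 2) ↔ ‖u‖ ≤ r := by
  rw [hnorm, Real.sqrt_le_left hr, CStarAlgebra.norm_le_iff_le_algebraMap _ (sq_nonneg r) (hpos u)]

variable [Module A M]

theorem inner_map_self_le_of_le_mul_star {inner : M → M → A}
    (hsesq : ∀ (a b : A) (u v : M), inner (a • u) (b • v) = b * inner u v * star a)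
    (hpos : ∀ u : M, 0 ≤ inner u u) (hnorm : ∀ u : M, ‖u‖ = √‖inner u u‖)
    (σ : A →⋆ₐ[ℝ] A) {S : M → M} (hS : ∀ (a : A) (m : M), S (a • m) = σ a • S m)
    {N : ℝ} (hN : 0 ≤ N) (hSN : ∀ m : M, ‖S m‖ ≤ N * ‖m‖) {w : M} {e : A} (he : IsUnit e)
    (hwe : inner w w ≤ e * star e) :
    inner (S w) (S w) ≤ N ^ 2 • σ (e * star e) := by
  obtain ⟨E, rfl⟩ := he
  set m := (↑E⁻¹ : A) • w
  have hm : ‖m‖ ≤ 1 := by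
    rw [← inner_self_le_algebraMap_iff hpos hnorm m zero_le_one, one_pow, map_one]
    calc inner m m = ↑E⁻¹ * inner w w * star (↑E⁻¹ : A) := hsesq _ _ _ _
      _ ≤ ↑E⁻¹ * (E * star (E : A)) * star (↑E⁻¹ : A) := star_right_conjugate_le_conjugate hwe _
      _ = 1 := by simp [← star_mul]
  have hSm : inner (S m) (S m) ≤ algebraMap ℝ A (N ^ 2) := by
    rw [inner_self_le_algebraMap_iff hpos hnorm _ hN]
    simpa using (hSN m).trans (mul_le_of_le_one_right hN hm)
  have hσE : σ E * σ ↑E⁻¹ = 1 := by rw [← map_mul, E.mul_inv, map_one]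
  calc inner (S w) (S w)
      = σ E * (σ ↑E⁻¹ * inner (S w) (S w) * star (σ ↑E⁻¹)) * star (σ E) := by
        rw [← mul_assoc, ← mul_assoc, hσE, one_mul, mul_assoc, ← star_mul, hσE, star_one, mul_one]
    _ = σ E * inner (S m) (S m) * star (σ E) := by rw [hS, hsesq]
    _ ≤ σ E * algebraMap ℝ A (N ^ 2) * star (σ E) := star_right_conjugate_le_conjugate hSm _
    _ = N ^ 2 • σ (E * star (E : A)) := by
      rw [Algebra.algebraMap_eq_smul_one, mul_smul_comm, mul_one, smul_mul_assoc, map_mul, map_star]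

theorem inner_map_self_le {inner : M → M → A}
    (hsesq : ∀ (a b : A) (u v : M), inner (a • u) (b • v) = b * inner u v * star a)
    (hpos : ∀ u : M, 0 ≤ inner u u) (hnorm : ∀ u : M, ‖u‖ = √‖inner u u‖)
    (σ : A →⋆ₐ[ℝ] A) {S : M → M} (hS : ∀ (a : A) (m : M), S (a • m) = σ a • S m)
    {N : ℝ} (hN : 0 ≤ N) (hSN : ∀ m : M, ‖S m‖ ≤ N * ‖m‖) (w : M) :
    inner (S w) (S w) ≤ N ^ 2 • σ (inner w w) := by
  refine le_of_forall_pos_le_add_smul (c := algebraMap ℝ A (N ^ 2)) fun ε hε => ?_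
  obtain ⟨e, he, he_sa, hb⟩ :=
    CStarAlgebra.isStrictlyPositive_iff_exists_isUnit_and_isSelfAdjoint_and_eq_mul_self.mp
      ((isStrictlyPositive_algebraMap hε).nonneg_add (hpos w))
  replace hb : inner w w + algebraMap ℝ A ε = e * star e := by rw [hb, he_sa.star_eq]
  calc inner (S w) (S w) ≤ N ^ 2 • σ (e * star e) :=
        inner_map_self_le_of_le_mul_star hsesq hpos hnorm σ hS hN hSN he
          (hb ▸ le_add_of_nonneg_right (algebraMap_nonneg A hε.le))
    _ = N ^ 2 • σ (inner w w) + ε • algebraMap ℝ A (N ^ 2) := by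
      rw [← hb, map_add, AlgHomClass.commutes, smul_add, Algebra.algebraMap_eq_smul_one,
        Algebra.algebraMap_eq_smul_one, smul_smul, smul_smul, mul_comm]

end HilbertModule

theorem averaged_norm_equivalent_general
    {G : Type*} [Group G] [TopologicalSpace G] [CompactSpace G]
    [MeasurableSpace G] [BorelSpace G]
    (μ : Measure G) [IsProbabilityMeasure μ]
    {A : Type*} [CStarAlgebra A] [PartialOrder A] [StarOrderedRing A]
    (φ : G →* RingAut A) (hstar : ∀ g (a : A), φ g (star a) = star (φ g a))
    (hφcont : Continuous fun p : G × A => φ p.1 p.2)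
    {M : Type*} [NormedAddCommGroup M] [Module A M]
    (inner : M → M → A)
    (hsesq : ∀ (a b : A) (u v : M), inner (a • u) (b • v) = b * inner u v * star a)
    (hpos : ∀ u : M, 0 ≤ inner u u)
    (hnorm : ∀ u : M, ‖u‖ = Real.sqrt ‖inner u u‖)
    (T : G → M → M)
    (hTsmul : ∀ g (a : A) (m : M), T g (a • m) = (φ g a) • T g m)
    (hTone : ∀ m : M, T 1 m = m)
    (hTmul : ∀ g h (m : M), T (g * h) m = T g (T h m))
    (hcont : ∀ u v : M, Continuous fun g : G => (φ g)⁻¹ (inner (T g u) (T g v)))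
    (N : ℝ) (hN : 0 < N) (hbound : ∀ (g : G) (u : M), ‖T g u‖ ≤ N * ‖u‖)
    (u : M) :
    N⁻¹ * ‖u‖ ≤ Real.sqrt ‖∫ g, (φ g)⁻¹ (inner (T g u) (T g u)) ∂μ‖ ∧
      Real.sqrt ‖∫ g, (φ g)⁻¹ (inner (T g u) (T g u)) ∂μ‖ ≤ N * ‖u‖ := by
  let σ (g : G) : A →⋆ₐ[ℝ] A := RingHom.toRealStarAlgHom (φ g⁻¹ : A ≃+* A)
    (hφcont.comp (Continuous.prodMk_right g⁻¹)) (hstar g⁻¹)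
  set F : G → A := fun g => (φ g)⁻¹ (inner (T g u) (T g u))
  have hσF (g : G) : σ g (inner (T g u) (T g u)) = F g := by simp only [σ, F, map_inv]; rfl
  have hF : Integrable F μ := (hcont u u).integrable_of_hasCompactSupport (.of_compactSpace _)
  have hlower : inner u u ≤ N ^ 2 • ∫ g, F g ∂μ := by
    calc inner u u = ∫ _, inner u u ∂μ := by simp
      _ ≤ ∫ g, N ^ 2 • F g ∂μ := integral_mono (integrable_const _) (hF.smul _) fun g => by
        have := inner_map_self_le hsesq hpos hnorm (σ g) (S := T g⁻¹) (hTsmul g⁻¹) hN.le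
          (hbound g⁻¹) (T g u)
        rwa [← hTmul, inv_mul_cancel, hTone, hσF] at this
      _ = N ^ 2 • ∫ g, F g ∂μ := integral_smul _ _
  have hupper : ∫ g, F g ∂μ ≤ algebraMap ℝ A ((N * ‖u‖) ^ 2) := by
    calc ∫ g, F g ∂μ ≤ ∫ _, algebraMap ℝ A ((N * ‖u‖) ^ 2) ∂μ :=
          integral_mono hF (integrable_const _) fun g => by
            rw [← hσF, ← AlgHomClass.commutes (σ g)]
            exact OrderHomClass.mono (σ g)
              ((inner_self_le_algebraMap_iff hpos hnorm _ (by positivity)).mpr (hbound g u))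
      _ = algebraMap ℝ A ((N * ‖u‖) ^ 2) := by simp
  have hF_nonneg : 0 ≤ ∫ g, F g ∂μ := integral_nonneg fun g => by
    simpa [hσF] using OrderHomClass.mono (σ g) (hpos (T g u))
  constructor
  · rw [inv_mul_le_iff₀ hN, hnorm, ← Real.sqrt_sq hN.le, ← Real.sqrt_mul (sq_nonneg N)]
    refine Real.sqrt_le_sqrt ?_
    simpa [norm_smul] using CStarAlgebra.norm_le_norm_of_nonneg_of_le (hpos u) hlower
  · rw [Real.sqrt_le_left (by positivity)]
    exact (CStarAlgebra.norm_le_iff_le_algebraMap _ (by positivity) hF_nonneg).mpr hupper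

/-- Let a compact group `G` act continuously on a unital C*-algebra `A`
(via *-automorphisms `φ`) and on `l₂(A)` — here modelled by a Hilbert `A`-module `M` whose
norm satisfies `‖u‖ = ‖⟨u,u⟩‖^{1/2}` — by bounded `A`-semilinear automorphisms `T g`
(`T g (a • u) = φ g a • T g u`) with `‖T g u‖ ≤ N ‖u‖` for all `g`.  Then the averaged
inner product `⟨u,v⟩' = ∫_G g⁻¹ ⟨T g u, T g v⟩ dg` defines a norm equivalent to the original
one: `N⁻¹ ‖u‖ ≤ ‖u‖' ≤ N ‖u‖`, where `‖u‖' = ‖⟨u,u⟩'‖^{1/2}`. -/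
theorem averaged_norm_equivalent
    {G : Type*} [Group G] [TopologicalSpace G] [IsTopologicalGroup G] [CompactSpace G]
    [MeasurableSpace G] [BorelSpace G]
    (μ : Measure G) [μ.IsHaarMeasure] [IsProbabilityMeasure μ]
    {A : Type*} [CStarAlgebra A] [PartialOrder A] [StarOrderedRing A]
    (φ : G →* RingAut A) (hstar : ∀ g (a : A), φ g (star a) = star (φ g a))
    (hφcont : Continuous fun p : G × A => φ p.1 p.2)
    {M : Type*} [NormedAddCommGroup M] [Module A M]
    (inner : M → M → A)
    (hsesq : ∀ (a b : A) (u v : M), inner (a • u) (b • v) = b * inner u v * star a)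
    (hadd : ∀ u v w : M, inner (u + v) w = inner u w + inner v w)
    (hherm : ∀ u v : M, star (inner u v) = inner v u)
    (hpos : ∀ u : M, 0 ≤ inner u u)
    (hnorm : ∀ u : M, ‖u‖ = Real.sqrt ‖inner u u‖)
    (T : G → M → M)
    (hTadd : ∀ g (x y : M), T g (x + y) = T g x + T g y)
    (hTbij : ∀ g, Function.Bijective (T g))
    (hTsmul : ∀ g (a : A) (m : M), T g (a • m) = (φ g a) • T g m)
    (hTone : ∀ m : M, T 1 m = m)
    (hTmul : ∀ g h (m : M), T (g * h) m = T g (T h m))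
    (hcont : ∀ u v : M, Continuous fun g : G => (φ g)⁻¹ (inner (T g u) (T g v)))
    (N : ℝ) (hN : 0 < N) (hbound : ∀ (g : G) (u : M), ‖T g u‖ ≤ N * ‖u‖)
    (u : M) :
    N⁻¹ * ‖u‖ ≤ Real.sqrt ‖∫ g, (φ g)⁻¹ (inner (T g u) (T g u)) ∂μ‖ ∧
      Real.sqrt ‖∫ g, (φ g)⁻¹ (inner (T g u) (T g u)) ∂μ‖ ≤ N * ‖u‖ :=
  averaged_norm_equivalent_general μ φ hstar hφcont inner hsesq hpos hnorm T hTsmul hTone hTmul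
    hcont N hN hbound u
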